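/- arXiv:2405.19017 — 8 statements merged into one kernel-verified Lean document; each statement's English description precedes it below -/
import Mathlib

section
/- Let S be a finite nonempty type, let P, P', Pstar : Matrix S S ℝ, let J : ℝ and v, c : S → ℝ. Assume: (i) the Bellman evaluation equation J + v s = c s + ∑_{s'} P s s' * v s' holds for every s ∈ S; (ii) Pstar * P' = Pstar (matrix product); (iii) Pstar.mulVec (fun _ => 1) = fun _ => 1 (each row of Pstar sums to 1). Then for every s ∈ S, ∑_{s'} Pstar s s' * c s' − J = ∑_{s'} (Pstar * (P' − P)) s s' * v s', i.e. Pstar.mulVec c − J • (fun _ => 1) = (Pstar * (P' − P)).mulVec v. -/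
open Matrix

/-- Core computation of the Feasibility Lemma: if `(J, v)` satisfies the Bellman evaluation
equation for cost `c` and transition matrix `P`, and `Pstar` is a limiting matrix of `P'`
(so `Pstar * P' = Pstar` with rows summing to `1`), then
`Pstar.mulVec c − J • 1 = (Pstar * (P' − P)).mulVec v`. -/
theorem limiting_matrix_gain_identity
    {S : Type*} [Fintype S] [DecidableEq S] [Nonempty S]
    (P P' Pstar : Matrix S S ℝ) (J : ℝ) (v c : S → ℝ)
    (hBellman : ∀ s, J + v s = c s + ∑ s', P s s' * v s')
    (hPstarP' : Pstar * P' = Pstar)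
    (hrow : Pstar.mulVec (fun _ => (1 : ℝ)) = fun _ => (1 : ℝ)) :
    ∀ s, (∑ s', Pstar s s' * c s') - J = ∑ s', (Pstar * (P' - P)) s s' * v s' := by
  intro s
  have hc : ∀ s', c s' = J + v s' - ∑ t, P s' t * v t := fun s' => by linarith [hBellman s']
  have hrows : ∑ s', Pstar s s' = 1 := by
    have := congrFun hrow s
    simpa [Matrix.mulVec, dotProduct] using this
  have hmul : Pstar * (P' - P) = Pstar - Pstar * P := by
    rw [Matrix.mul_sub, hPstarP']
  rw [hmul]
  have hPP : ∑ s', (Pstar * P) s s' * v s' = ∑ t, Pstar s t * ∑ s', P t s' * v s' := by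
    simp only [Matrix.mul_apply, Finset.sum_mul, Finset.mul_sum]
    rw [Finset.sum_comm]
    congr 1; ext t; congr 1; ext s'; ring
  simp only [Matrix.sub_apply, sub_mul, Finset.sum_sub_distrib, hPP]
  simp_rw [hc]
  simp only [mul_sub, mul_add, Finset.sum_sub_distrib, Finset.sum_add_distrib,
    ← Finset.sum_mul, hrows]
  ring
end

section
/- Let S be a finite nonempty type, let P, P', Pstar : Matrix S S ℝ, let J, δ, D : ℝ and v, c : S → ℝ. Assume: (i) the Bellman evaluation equation J + v s = c s + ∑_{s'} P s s' * v s' holds for every s ∈ S; (ii) Pstar * P' = Pstar; (iii) Pstar.mulVec (fun _ => 1) = fun _ => 1; (iv) Pstar s s' ≥ 0 for all s, s'; (v) ∑_{s'} |P' s s' − P s s'| ≤ δ for every s; (vi) |v s| ≤ D for every s. Then for every s ∈ S, ∑_{s'} Pstar s s' * c s' ≤ J + δ * D. -/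
open Matrix

/-- Gain perturbation bound of the Feasibility Lemma: if `(J, v)` satisfies the Bellman
evaluation equation for cost `c` and transitions `P`, `Pstar` is a nonnegative limiting
matrix of `P'` with rows summing to `1`, the rows of `P'` and `P` are `δ`-close in `L¹`
norm, and `|v| ≤ D`, then the long-run average cost `(Pstar.mulVec c) s` is at most
`J + δ * D` for every state `s`. -/
theorem limiting_matrix_gain_perturbation
    {S : Type*} [Fintype S] [DecidableEq S] [Nonempty S]
    (P P' Pstar : Matrix S S ℝ) (J δ D : ℝ) (v c : S → ℝ)
    (hBellman : ∀ s, J + v s = c s + ∑ s', P s s' * v s')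
    (hPstarP' : Pstar * P' = Pstar)
    (hrow : Pstar.mulVec (fun _ => (1 : ℝ)) = fun _ => (1 : ℝ))
    (hPstarNonneg : ∀ s s', 0 ≤ Pstar s s')
    (hclose : ∀ s, ∑ s', |P' s s' - P s s'| ≤ δ)
    (hv : ∀ s, |v s| ≤ D) :
    ∀ s, ∑ s', Pstar s s' * c s' ≤ J + δ * D := by
  intro s
  have hD : 0 ≤ D := le_trans (abs_nonneg _) (hv (Classical.arbitrary S))
  -- row sum of Pstar is 1
  have hrow1 : ∑ s', Pstar s s' = 1 := by
    have := congrFun hrow s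
    simpa [Matrix.mulVec, dotProduct] using this
  -- c s' = J + v s' - ∑ t, P s' t * v t
  have hc : ∀ s', c s' = J + v s' - ∑ t, P s' t * v t := by
    intro s'; have := hBellman s'; linarith
  -- Pstar v = Pstar P' v
  have hPv : ∑ s', Pstar s s' * v s' = ∑ s', Pstar s s' * ∑ t, P' s' t * v t := by
    have h := congrFun (congrFun hPstarP' s)
    calc ∑ s', Pstar s s' * v s' = ∑ s', (Pstar * P') s s' * v s' := by
          simp only [h]
      _ = ∑ s', Pstar s s' * ∑ t, P' s' t * v t := by
          simp only [Matrix.mul_apply, Finset.sum_mul]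
          rw [Finset.sum_comm]
          refine Finset.sum_congr rfl fun s' _ => ?_
          rw [Finset.mul_sum]
          exact Finset.sum_congr rfl fun t _ => by ring
  calc ∑ s', Pstar s s' * c s'
      = ∑ s', Pstar s s' * (J + v s' - ∑ t, P s' t * v t) := by
        congr 1; ext s'; rw [hc s']
    _ = J * ∑ s', Pstar s s' + (∑ s', Pstar s s' * v s'
          - ∑ s', Pstar s s' * ∑ t, P s' t * v t) := by
        rw [Finset.mul_sum, ← Finset.sum_sub_distrib, ← Finset.sum_add_distrib]
        congr 1; ext s'; ring
    _ = J + ∑ s', Pstar s s' * ∑ t, (P' s' t - P s' t) * v t := by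
        rw [hrow1, mul_one, hPv, ← Finset.sum_sub_distrib]
        congr 1
        refine Finset.sum_congr rfl fun s' _ => ?_
        rw [← mul_sub, ← Finset.sum_sub_distrib]
        congr 1
        exact Finset.sum_congr rfl fun t _ => by ring
    _ ≤ J + ∑ s', Pstar s s' * (δ * D) := by
        gcongr with s' _
        · exact hPstarNonneg s s'
        · calc ∑ t, (P' s' t - P s' t) * v t
              ≤ ∑ t, |P' s' t - P s' t| * D := by
                refine Finset.sum_le_sum fun t _ => ?_
                calc (P' s' t - P s' t) * v t ≤ |(P' s' t - P s' t) * v t| := le_abs_self _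
                  _ = |P' s' t - P s' t| * |v t| := abs_mul _ _
                  _ ≤ |P' s' t - P s' t| * D := by gcongr; exact hv t
            _ = (∑ t, |P' s' t - P s' t|) * D := by rw [Finset.sum_mul]
            _ ≤ δ * D := by gcongr; exact hclose s'
    _ = J + δ * D := by rw [← Finset.sum_mul, hrow1, one_mul]
end

section
/- Let S be a finite nonempty type, let P, P' : Matrix S S ℝ, let J, δ, D : ℝ and v, c : S → ℝ. Assume: (i) P' is row-stochastic; (ii) the Bellman evaluation equation J + v s = c s + ∑_{s'} P s s' * v s' holds for every s ∈ S; (iii) ∑_{s'} |P' s s' − P s s'| ≤ δ for every s; (iv) |v s| ≤ D for every s, with D ≥ 0. Then for every s ∈ S and every integer T ≥ 1, (1/T) * ∑_{t=0}^{T−1} ((P'^t).mulVec c) s ≤ J + δ * D + 2 * D / T; in particular, for every s, limsup_{T → ∞} (1/T) * ∑_{t=0}^{T−1} ((P'^t).mulVec c) s ≤ J + δ * D. -/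
open Matrix Filter

/-- A matrix is row-stochastic if it has nonnegative entries and each row sums to `1`. -/
def RowStochastic {S : Type*} [Fintype S] (P : Matrix S S ℝ) : Prop :=
  (∀ s s', 0 ≤ P s s') ∧ ∀ s, ∑ s', P s s' = 1

/-- Gain perturbation bound without ergodicity assumptions: if `(J, v)` satisfies the
Bellman evaluation equation for cost `c` and transitions `P`, `P'` is row-stochastic with
rows `δ`-close in `L¹` norm to those of `P`, and `|v| ≤ D` with `D ≥ 0`, then the finite
Cesàro averages of expected cost under `P'` are bounded by `J + δ * D + 2 * D / T`, and
hence their limsup is at most `J + δ * D`. -/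
theorem cesaro_gain_perturbation
    {S : Type*} [Fintype S] [DecidableEq S] [Nonempty S]
    (P P' : Matrix S S ℝ) (J δ D : ℝ) (v c : S → ℝ)
    (hP' : RowStochastic P')
    (hBellman : ∀ s, J + v s = c s + ∑ s', P s s' * v s')
    (hclose : ∀ s, ∑ s', |P' s s' - P s s'| ≤ δ)
    (hv : ∀ s, |v s| ≤ D) (hD : 0 ≤ D) :
    (∀ s, ∀ T : ℕ, 1 ≤ T →
        (1 / (T : ℝ)) * ∑ t ∈ Finset.range T, ((P' ^ t).mulVec c) s
          ≤ J + δ * D + 2 * D / (T : ℝ)) ∧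
      (∀ s, limsup
          (fun T : ℕ => (1 / (T : ℝ)) * ∑ t ∈ Finset.range T, ((P' ^ t).mulVec c) s)
          atTop ≤ J + δ * D) := by
  obtain ⟨hP'nn, hP'sum⟩ := hP'
  -- powers of a row-stochastic matrix are row-stochastic
  have hpow : ∀ t : ℕ, (∀ s s', 0 ≤ (P' ^ t) s s') ∧ (∀ s, ∑ s', (P' ^ t) s s' = 1) := by
    intro t
    induction t with
    | zero =>
      constructor
      · intro s s'
        simp only [pow_zero, Matrix.one_apply]
        split <;> norm_num
      · intro s; simp [Matrix.one_apply]
    | succ t ih =>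
      constructor
      · intro s s'
        rw [pow_succ, Matrix.mul_apply]
        exact Finset.sum_nonneg fun j _ => mul_nonneg (ih.1 s j) (hP'nn j s')
      · intro s
        rw [pow_succ]
        simp only [Matrix.mul_apply]
        rw [Finset.sum_comm]
        calc ∑ j, ∑ s', (P' ^ t) s j * P' j s'
            = ∑ j, (P' ^ t) s j * ∑ s', P' j s' := by
              simp [Finset.mul_sum]
          _ = 1 := by simp [hP'sum, ih.2 s]
  -- contraction property
  have hcontr : ∀ (t : ℕ) (B : ℝ) (w : S → ℝ), (∀ s', |w s'| ≤ B) →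
      ∀ s, |((P' ^ t).mulVec w) s| ≤ B := by
    intro t B w hw s
    calc |((P' ^ t).mulVec w) s| = |∑ s', (P' ^ t) s s' * w s'| := by
          simp [Matrix.mulVec, dotProduct]
      _ ≤ ∑ s', |(P' ^ t) s s' * w s'| := Finset.abs_sum_le_sum_abs _ _
      _ = ∑ s', (P' ^ t) s s' * |w s'| := by
          refine Finset.sum_congr rfl fun s' _ => ?_
          rw [abs_mul, abs_of_nonneg ((hpow t).1 s s')]
      _ ≤ ∑ s', (P' ^ t) s s' * B := Finset.sum_le_sum fun s' _ =>
          mul_le_mul_of_nonneg_left (hw s') ((hpow t).1 s s')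
      _ = B := by rw [← Finset.sum_mul, (hpow t).2 s, one_mul]
  -- the perturbation vector
  set w : S → ℝ := fun s => ∑ s', (P s s' - P' s s') * v s' with hwdef
  have hwb : ∀ s, |w s| ≤ δ * D := by
    intro s
    calc |w s| ≤ ∑ s', |(P s s' - P' s s') * v s'| := Finset.abs_sum_le_sum_abs _ _
      _ = ∑ s', |P' s s' - P s s'| * |v s'| := by
          refine Finset.sum_congr rfl fun s' _ => ?_
          rw [abs_mul, abs_sub_comm]
      _ ≤ ∑ s', |P' s s' - P s s'| * D := Finset.sum_le_sum fun s' _ =>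
          mul_le_mul_of_nonneg_left (hv s') (abs_nonneg _)
      _ = (∑ s', |P' s s' - P s s'|) * D := by rw [Finset.sum_mul]
      _ ≤ δ * D := mul_le_mul_of_nonneg_right (hclose s) hD
  -- rewrite c
  have hcv : c = (fun _ => J) + v - (P'.mulVec v + w) := by
    funext s
    have hb := hBellman s
    have hsplit : ∑ s', P s s' * v s' = (P'.mulVec v) s + w s := by
      simp only [Matrix.mulVec, dotProduct, hwdef]
      rw [← Finset.sum_add_distrib]
      exact Finset.sum_congr rfl fun s' _ => by ring
    simp only [Pi.add_apply, Pi.sub_apply]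
    linarith
  -- key identity
  have key : ∀ t s, ((P' ^ t).mulVec c) s
      = J + ((P' ^ t).mulVec v) s - ((P' ^ (t+1)).mulVec v) s - ((P' ^ t).mulVec w) s := by
    intro t s
    have h1 : (P' ^ t).mulVec (fun _ => J) s = J := by
      simp only [Matrix.mulVec, dotProduct]
      rw [← Finset.sum_mul, (hpow t).2 s, one_mul]
    have h2 : (P' ^ t).mulVec (P'.mulVec v) = (P' ^ (t+1)).mulVec v := by
      rw [Matrix.mulVec_mulVec, ← pow_succ]
    rw [hcv, Matrix.mulVec_sub, Matrix.mulVec_add, Matrix.mulVec_add]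
    simp only [Pi.sub_apply, Pi.add_apply, h1, h2]
    ring
  -- per-step upper bound
  have hstep : ∀ t s, ((P' ^ t).mulVec c) s
      ≤ J + δ * D + (((P' ^ t).mulVec v) s - ((P' ^ (t+1)).mulVec v) s) := by
    intro t s
    have he := hcontr t (δ * D) w hwb s
    have := key t s
    have h3 : -((P' ^ t).mulVec w) s ≤ δ * D := by
      have := abs_le.mp he
      linarith [this.1]
    linarith
  -- finite Cesàro bound
  have hfin : ∀ s, ∀ T : ℕ, 1 ≤ T →
      (1 / (T : ℝ)) * ∑ t ∈ Finset.range T, ((P' ^ t).mulVec c) s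
        ≤ J + δ * D + 2 * D / (T : ℝ) := by
    intro s T hT
    have hTpos : (0 : ℝ) < T := by exact_mod_cast hT
    have hsum : ∑ t ∈ Finset.range T, ((P' ^ t).mulVec c) s
        ≤ (T : ℝ) * (J + δ * D) + 2 * D := by
      calc ∑ t ∈ Finset.range T, ((P' ^ t).mulVec c) s
          ≤ ∑ t ∈ Finset.range T,
              (J + δ * D + (((P' ^ t).mulVec v) s - ((P' ^ (t+1)).mulVec v) s)) :=
            Finset.sum_le_sum fun t _ => hstep t s
        _ = (T : ℝ) * (J + δ * D)
              + (((P' ^ 0).mulVec v) s - ((P' ^ T).mulVec v) s) := by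
            rw [Finset.sum_add_distrib, Finset.sum_const, Finset.card_range,
              Finset.sum_range_sub' (fun t => ((P' ^ t).mulVec v) s)]
            push_cast
            ring
        _ ≤ (T : ℝ) * (J + δ * D) + 2 * D := by
            have h0 := abs_le.mp (hcontr 0 D v hv s)
            have hTb := abs_le.mp (hcontr T D v hv s)
            linarith [h0.2, hTb.1]
    have heq : (1 / (T : ℝ)) * ((T : ℝ) * (J + δ * D) + 2 * D)
        = J + δ * D + 2 * D / (T : ℝ) := by
      field_simp
    calc (1 / (T : ℝ)) * ∑ t ∈ Finset.range T, ((P' ^ t).mulVec c) s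
        ≤ (1 / (T : ℝ)) * ((T : ℝ) * (J + δ * D) + 2 * D) := by
          apply mul_le_mul_of_nonneg_left hsum
          positivity
      _ = J + δ * D + 2 * D / (T : ℝ) := heq
  refine ⟨hfin, fun s => ?_⟩
  -- limsup bound
  set f : ℕ → ℝ := fun T => (1 / (T : ℝ)) * ∑ t ∈ Finset.range T, ((P' ^ t).mulVec c) s
    with hfdef
  set C : ℝ := Finset.univ.sup' Finset.univ_nonempty (fun s => |c s|) with hCdef
  have hcC : ∀ s', |c s'| ≤ C := fun s' =>
    Finset.le_sup' (fun s => |c s|) (Finset.mem_univ s')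
  have hC0 : 0 ≤ C := le_trans (abs_nonneg _) (hcC (Classical.arbitrary S))
  have hlow : ∀ T, -C ≤ f T := by
    intro T
    rcases Nat.eq_zero_or_pos T with h0 | hpos
    · simp [hfdef, h0]; linarith
    · have hTpos : (0 : ℝ) < T := by exact_mod_cast hpos
      have hsum : (T : ℝ) * (-C) ≤ ∑ t ∈ Finset.range T, ((P' ^ t).mulVec c) s := by
        calc (T : ℝ) * (-C) = ∑ _t ∈ Finset.range T, (-C) := by
              rw [Finset.sum_const, Finset.card_range]; push_cast; ring
          _ ≤ ∑ t ∈ Finset.range T, ((P' ^ t).mulVec c) s :=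
            Finset.sum_le_sum fun t _ => (abs_le.mp (hcontr t C c hcC s)).1
      have : (1 / (T : ℝ)) * ((T : ℝ) * (-C)) ≤ f T := by
        apply mul_le_mul_of_nonneg_left hsum
        positivity
      calc -C = (1 / (T : ℝ)) * ((T : ℝ) * (-C)) := by field_simp
        _ ≤ f T := this
  have hg : Tendsto (fun T : ℕ => J + δ * D + 2 * D / (T : ℝ)) atTop
      (nhds (J + δ * D)) := by
    have h0 : Tendsto (fun T : ℕ => 2 * D / (T : ℝ)) atTop (nhds 0) := by
      have := tendsto_one_div_atTop_nhds_zero_nat.const_mul (2 * D)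
      simpa [div_eq_mul_inv, mul_comm, mul_assoc, mul_left_comm] using this
    have := (tendsto_const_nhds (x := J + δ * D) (f := atTop (α := ℕ))).add h0
    simpa using this
  have hfg : ∀ᶠ T in atTop, f T ≤ J + δ * D + 2 * D / (T : ℝ) :=
    eventually_atTop.mpr ⟨1, fun T hT => hfin s T hT⟩
  have hbd : IsBoundedUnder (· ≥ ·) atTop f :=
    isBoundedUnder_of ⟨-C, fun T => hlow T⟩
  have hcob : IsCoboundedUnder (· ≤ ·) atTop f := hbd.isCoboundedUnder_le
  have hbdd : IsBoundedUnder (· ≤ ·) atTop (fun T : ℕ => J + δ * D + 2 * D / (T : ℝ)) :=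
    hg.isBoundedUnder_le
  calc limsup f atTop ≤ limsup (fun T : ℕ => J + δ * D + 2 * D / (T : ℝ)) atTop :=
        limsup_le_limsup hfg hcob hbdd
    _ = J + δ * D := hg.limsup_eq
end

section
/- Let S and A be finite nonempty types, let p and p' be transition kernels, π a stationary policy, c : S → A → ℝ a cost function, and τ, γ, δ, D : ℝ with D ≥ 0. Assume: (i) ∑_{s'} |p' s a s' − p s a s'| ≤ δ for all s ∈ S and a ∈ A; (ii) there exist J : ℝ and v : S → ℝ satisfying the Bellman evaluation equation for π under p, i.e. J + v s = c_π s + ∑_{s'} (P_π(p)) s s' * v s' for every s; (iii) 0 ≤ v s ≤ D for every s; (iv) J ≤ τ − γ; (v) δ * D ≤ γ. Then for every s ∈ S, limsup_{T → ∞} (1/T) * ∑_{t=0}^{T−1} (((P_π(p'))^t).mulVec c_π) s ≤ τ, i.e. the infinite-horizon expected average cost of policy π under the sampled transitions p' is at most the threshold τ from every initial state. -/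
open Matrix Filter

/-- A transition kernel: nonnegative with each `p s a` summing to `1` over next states. -/
def IsTransitionKernel {S A : Type*} [Fintype S] (p : S → A → S → ℝ) : Prop :=
  (∀ s a s', 0 ≤ p s a s') ∧ ∀ s a, ∑ s', p s a s' = 1

/-- A stationary (randomized) policy: nonnegative with each `π s` summing to `1`. -/
def IsStationaryPolicy {S A : Type*} [Fintype A] (π : S → A → ℝ) : Prop :=
  (∀ s a, 0 ≤ π s a) ∧ ∀ s, ∑ a, π s a = 1

/-- The transition matrix on states induced by policy `π` under kernel `p`. -/
def policyMatrix {S A : Type*} [Fintype A] (π : S → A → ℝ) (p : S → A → S → ℝ) :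
    Matrix S S ℝ :=
  fun s s' => ∑ a, π s a * p s a s'

/-- The cost vector induced by policy `π` and cost function `c`. -/
def policyCost {S A : Type*} [Fintype A] (π : S → A → ℝ) (c : S → A → ℝ) : S → ℝ :=
  fun s => ∑ a, π s a * c s a

/-- Feasibility Lemma: if a policy `π` is strictly feasible for the true kernel `p`
(Slater gap `γ`), its bias `v` is bounded by `D`, and the sampled kernel `p'` is `δ`-close
to `p` in per-`(s,a)` `L¹` norm with `δ * D ≤ γ`, then the infinite-horizon expected
average cost of `π` under `p'` is at most the threshold `τ` from every initial state. -/
theorem feasibility_lemma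
    {S A : Type*} [Fintype S] [Fintype A] [DecidableEq S] [Nonempty S] [Nonempty A]
    (p p' : S → A → S → ℝ) (π : S → A → ℝ) (c : S → A → ℝ)
    (τ γ δ D : ℝ) (hD : 0 ≤ D)
    (hp : IsTransitionKernel p) (hp' : IsTransitionKernel p')
    (hπ : IsStationaryPolicy π)
    (hclose : ∀ s a, ∑ s', |p' s a s' - p s a s'| ≤ δ)
    (J : ℝ) (v : S → ℝ)
    (hBellman : ∀ s, J + v s =
      policyCost π c s + ∑ s', policyMatrix π p s s' * v s')
    (hv : ∀ s, 0 ≤ v s ∧ v s ≤ D)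
    (hJ : J ≤ τ - γ)
    (hδD : δ * D ≤ γ) :
    ∀ s, limsup
        (fun T : ℕ => (1 / (T : ℝ)) *
          ∑ t ∈ Finset.range T, ((policyMatrix π p' ^ t).mulVec (policyCost π c)) s)
        atTop ≤ τ := by
  set P := policyMatrix π p' with hP
  set cπ := policyCost π c with hcπ
  -- P is stochastic
  have hPnn : ∀ s s', 0 ≤ P s s' := fun s s' =>
    Finset.sum_nonneg fun a _ => mul_nonneg (hπ.1 s a) (hp'.1 s a s')
  have hProw : ∀ s, ∑ s', P s s' = 1 := by
    intro s
    show ∑ s', ∑ a, π s a * p' s a s' = 1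
    rw [Finset.sum_comm]
    simp_rw [← Finset.mul_sum, hp'.2 s, mul_one]
    exact hπ.2 s
  -- powers of P are stochastic
  have hPow : ∀ n : ℕ, (∀ s s', 0 ≤ (P ^ n) s s') ∧ ∀ s, ∑ s', (P ^ n) s s' = 1 := by
    intro n
    induction n with
    | zero =>
      constructor
      · intro s s'
        rw [pow_zero]
        by_cases h : s = s' <;> simp [Matrix.one_apply, h]
      · intro s; simp [Matrix.one_apply]
    | succ n ih =>
      constructor
      · intro s s'
        rw [pow_succ, Matrix.mul_apply]
        exact Finset.sum_nonneg fun k _ => mul_nonneg (ih.1 s k) (hPnn k s')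
      · intro s
        simp_rw [pow_succ, Matrix.mul_apply]
        rw [Finset.sum_comm]
        simp_rw [← Finset.mul_sum, hProw, mul_one]
        exact ih.2 s
  -- key pointwise inequality
  have hkey : ∀ s, cπ s + (P.mulVec v) s ≤ τ + v s := by
    intro s
    have hdiff : (P.mulVec v) s - ∑ s', policyMatrix π p s s' * v s' ≤ δ * D := by
      have : (P.mulVec v) s - ∑ s', policyMatrix π p s s' * v s'
          = ∑ s', (P s s' - policyMatrix π p s s') * v s' := by
        rw [Matrix.mulVec, dotProduct]
        rw [← Finset.sum_sub_distrib]
        congr 1; ext s'; ring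
      rw [this]
      calc ∑ s', (P s s' - policyMatrix π p s s') * v s'
          ≤ ∑ s', |P s s' - policyMatrix π p s s'| * D := by
            apply Finset.sum_le_sum
            intro s' _
            calc (P s s' - policyMatrix π p s s') * v s'
                ≤ |P s s' - policyMatrix π p s s'| * v s' := by
                  apply mul_le_mul_of_nonneg_right (le_abs_self _) (hv s').1
              _ ≤ |P s s' - policyMatrix π p s s'| * D :=
                  mul_le_mul_of_nonneg_left (hv s').2 (abs_nonneg _)
        _ = (∑ s', |P s s' - policyMatrix π p s s'|) * D := by rw [Finset.sum_mul]
        _ ≤ δ * D := by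
            apply mul_le_mul_of_nonneg_right _ hD
            calc ∑ s', |P s s' - policyMatrix π p s s'|
                = ∑ s', |∑ a, π s a * (p' s a s' - p s a s')| := by
                  refine Finset.sum_congr rfl fun s' _ => ?_
                  show |(∑ a, π s a * p' s a s') - ∑ a, π s a * p s a s'| = _
                  rw [← Finset.sum_sub_distrib]
                  congr 1
                  exact Finset.sum_congr rfl fun a _ => by ring
              _ ≤ ∑ s', ∑ a, |π s a * (p' s a s' - p s a s')| :=
                  Finset.sum_le_sum fun s' _ => Finset.abs_sum_le_sum_abs _ _
              _ = ∑ a, π s a * ∑ s', |p' s a s' - p s a s'| := by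
                  rw [Finset.sum_comm]
                  congr 1; ext a
                  rw [Finset.mul_sum]
                  congr 1; ext s'
                  rw [abs_mul, abs_of_nonneg (hπ.1 s a)]
              _ ≤ ∑ a, π s a * δ :=
                  Finset.sum_le_sum fun a _ =>
                    mul_le_mul_of_nonneg_left (hclose s a) (hπ.1 s a)
              _ = δ := by rw [← Finset.sum_mul, hπ.2 s, one_mul]
    have hB := hBellman s
    have : cπ s + (P.mulVec v) s
        = J + v s + ((P.mulVec v) s - ∑ s', policyMatrix π p s s' * v s') := by
      rw [hcπ] at *; linarith [hB]
    rw [this]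
    linarith
  -- stochastic matrices preserve the key inequality: induction bound
  have hInd : ∀ T s, (∑ t ∈ Finset.range T, ((P ^ t).mulVec cπ) s)
      + ((P ^ T).mulVec v) s ≤ T * τ + v s := by
    intro T
    induction T with
    | zero => intro s; simp [Matrix.mulVec, dotProduct, Matrix.one_apply]
    | succ T ih =>
      intro s
      rw [Finset.sum_range_succ]
      have hsplit : ((P ^ T).mulVec cπ) s + ((P ^ (T+1)).mulVec v) s
          ≤ τ + ((P ^ T).mulVec v) s := by
        have h1 : ((P ^ (T+1)).mulVec v) s = ((P ^ T).mulVec (P.mulVec v)) s := by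
          rw [pow_succ, ← Matrix.mulVec_mulVec]
        rw [h1]
        have : ((P ^ T).mulVec cπ) s + ((P ^ T).mulVec (P.mulVec v)) s
            = ∑ k, (P ^ T) s k * (cπ k + (P.mulVec v) k) := by
          simp [Matrix.mulVec, dotProduct, ← Finset.sum_add_distrib, mul_add]
        rw [this]
        calc ∑ k, (P ^ T) s k * (cπ k + (P.mulVec v) k)
            ≤ ∑ k, (P ^ T) s k * (τ + v k) :=
              Finset.sum_le_sum fun k _ =>
                mul_le_mul_of_nonneg_left (hkey k) ((hPow T).1 s k)
          _ = τ + ((P ^ T).mulVec v) s := by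
              simp_rw [mul_add, Finset.sum_add_distrib, ← Finset.sum_mul, (hPow T).2 s,
                one_mul]
              rfl
      have := ih s
      push_cast
      linarith
  -- hence partial sums bounded
  have hSum : ∀ T s, (∑ t ∈ Finset.range T, ((P ^ t).mulVec cπ) s) ≤ T * τ + v s := by
    intro T s
    have hnn : 0 ≤ ((P ^ T).mulVec v) s :=
      Finset.sum_nonneg fun k _ => mul_nonneg ((hPow T).1 s k) (hv k).1
    linarith [hInd T s]
  intro s
  -- lower bound for coboundedness
  obtain ⟨m, hm⟩ : ∃ m : ℝ, ∀ k, m ≤ cπ k := by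
    refine ⟨Finset.univ.inf' Finset.univ_nonempty cπ, fun k => ?_⟩
    exact Finset.inf'_le _ (Finset.mem_univ k)
  have hlow : ∀ T : ℕ, min m 0 ≤ (1 / (T : ℝ)) * ∑ t ∈ Finset.range T, ((P ^ t).mulVec cπ) s := by
    intro T
    rcases Nat.eq_zero_or_pos T with h | h
    · simp [h]
    · have hT : (0:ℝ) < T := by exact_mod_cast h
      have hterm : ∀ t, m ≤ ((P ^ t).mulVec cπ) s := by
        intro t
        calc m = ∑ k, (P ^ t) s k * m := by
              rw [← Finset.sum_mul, (hPow t).2 s, one_mul]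
          _ ≤ ∑ k, (P ^ t) s k * cπ k :=
              Finset.sum_le_sum fun k _ =>
                mul_le_mul_of_nonneg_left (hm k) ((hPow t).1 s k)
          _ = ((P ^ t).mulVec cπ) s := rfl
      have hsum : (T : ℝ) * m ≤ ∑ t ∈ Finset.range T, ((P ^ t).mulVec cπ) s := by
        calc (T : ℝ) * m = ∑ _t ∈ Finset.range T, m := by
              rw [Finset.sum_const, Finset.card_range, nsmul_eq_mul]
          _ ≤ _ := Finset.sum_le_sum fun t _ => hterm t
      calc min m 0 ≤ m := min_le_left _ _
        _ = (1 / (T:ℝ)) * ((T:ℝ) * m) := by field_simp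
        _ ≤ _ := by
            apply mul_le_mul_of_nonneg_left hsum (by positivity)
  -- upper bound sequence
  set g : ℕ → ℝ := fun T => τ + v s * (1 / (T : ℝ)) with hg
  have hle : ∀ᶠ T : ℕ in atTop, (fun T : ℕ => (1 / (T : ℝ)) *
      ∑ t ∈ Finset.range T, ((P ^ t).mulVec cπ) s) T ≤ g T := by
    filter_upwards [eventually_gt_atTop 0] with T hT
    have hTpos : (0:ℝ) < T := by exact_mod_cast hT
    have := hSum T s
    have h1 : (1 / (T : ℝ)) * ∑ t ∈ Finset.range T, ((P ^ t).mulVec cπ) s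
        ≤ (1 / (T : ℝ)) * ((T : ℝ) * τ + v s) :=
      mul_le_mul_of_nonneg_left this (by positivity)
    calc _ ≤ (1 / (T : ℝ)) * ((T : ℝ) * τ + v s) := h1
      _ = τ + v s * (1 / (T : ℝ)) := by field_simp
  have hgt : Tendsto g atTop (nhds τ) := by
    have : Tendsto (fun T : ℕ => v s * (1 / (T : ℝ))) atTop (nhds 0) := by
      simpa using (tendsto_one_div_atTop_nhds_zero_nat).const_mul (v s)
    have h2 : Tendsto (fun T : ℕ => τ + v s * (1 / (T : ℝ))) atTop (nhds (τ + 0)) :=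
      tendsto_const_nhds.add this
    rw [add_zero] at h2
    exact h2
  have hcob : IsCoboundedUnder (· ≤ ·) atTop (fun T : ℕ => (1 / (T : ℝ)) *
      ∑ t ∈ Finset.range T, ((P ^ t).mulVec cπ) s) :=
    isCoboundedUnder_le_of_le atTop hlow
  have hbdd : IsBoundedUnder (· ≤ ·) atTop g := hgt.isBoundedUnder_le
  have := limsup_le_limsup hle hcob hbdd
  rwa [hgt.limsup_eq] at this
end

section
/- Let S be a finite nonempty type, let P : Matrix S S ℝ be row-stochastic, and let J : ℝ and v, c : S → ℝ satisfy the Bellman evaluation equation J + v s = c s + ∑_{s'} P s s' * v s' for every s ∈ S. Let M = max_{s ∈ S} |v s|. Then for every s ∈ S and every integer T ≥ 1, |(1/T) * ∑_{t=0}^{T−1} ((P^t).mulVec c) s − J| ≤ 2 * M / T; consequently, for every s, the Cesàro averages (1/T) * ∑_{t=0}^{T−1} ((P^t).mulVec c) s converge to J as T → ∞. -/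
open Matrix Filter

/-- The constant `J` in the Bellman evaluation equation is the infinite-horizon expected
average cost from every initial state, with an explicit `2 * max |v| / T` rate for the
Cesàro averages. -/
theorem bellman_gain_is_average_cost
    {S : Type*} [Fintype S] [DecidableEq S] [Nonempty S]
    (P : Matrix S S ℝ) (J : ℝ) (v c : S → ℝ)
    (hP : RowStochastic P)
    (hBellman : ∀ s, J + v s = c s + ∑ s', P s s' * v s')
    (M : ℝ) (hM : M = Finset.univ.sup' Finset.univ_nonempty fun s => |v s|) :
    (∀ s, ∀ T : ℕ, 1 ≤ T →
        |(1 / (T : ℝ)) * (∑ t ∈ Finset.range T, ((P ^ t).mulVec c) s) - J|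
          ≤ 2 * M / (T : ℝ)) ∧
      (∀ s, Tendsto
          (fun T : ℕ => (1 / (T : ℝ)) * ∑ t ∈ Finset.range T, ((P ^ t).mulVec c) s)
          atTop (nhds J)) := by
  obtain ⟨hpos, hsum⟩ := hP
  -- row sums of P^t are 1
  have hrow : ∀ t : ℕ, ∀ s, ∑ s', (P ^ t) s s' = 1 := by
    intro t
    induction t with
    | zero => intro s; simp [Matrix.one_apply]
    | succ n ih =>
      intro s
      rw [pow_succ]
      simp only [Matrix.mul_apply]
      rw [Finset.sum_comm]
      calc ∑ k, ∑ s', (P ^ n) s k * P k s' = ∑ k, (P ^ n) s k * ∑ s', P k s' := by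
            simp [Finset.mul_sum]
        _ = 1 := by simp [hsum, ih s]
  have hvM : ∀ s, |v s| ≤ M := by
    intro s; rw [hM]; exact Finset.le_sup' (fun s => |v s|) (Finset.mem_univ s)
  have hppos : ∀ t : ℕ, ∀ s i, 0 ≤ (P ^ t) s i := by
    intro t
    induction t with
    | zero => intro s i; rw [pow_zero, Matrix.one_apply]; positivity
    | succ n ih =>
      intro s i
      rw [pow_succ, Matrix.mul_apply]
      exact Finset.sum_nonneg fun k _ => mul_nonneg (ih s k) (hpos k i)
  have hbound : ∀ t : ℕ, ∀ s, |((P ^ t).mulVec v) s| ≤ M := by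
    intro t s
    unfold Matrix.mulVec dotProduct
    calc |∑ s', (P ^ t) s s' * v s'| ≤ ∑ s', |(P ^ t) s s' * v s'| :=
          Finset.abs_sum_le_sum_abs _ _
      _ ≤ ∑ s', (P ^ t) s s' * M := by
          apply Finset.sum_le_sum
          intro i _
          rw [abs_mul]
          have hpt : 0 ≤ (P ^ t) s i := hppos t s i
          rw [abs_of_nonneg hpt]
          exact mul_le_mul_of_nonneg_left (hvM i) hpt
      _ = M := by rw [← Finset.sum_mul, hrow t s, one_mul]
  -- c = J + v - P v pointwise, so P^t c = J + P^t v - P^(t+1) v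
  have hkey : ∀ t : ℕ, ∀ s,
      ((P ^ t).mulVec c) s = J + ((P ^ t).mulVec v) s - ((P ^ (t + 1)).mulVec v) s := by
    intro t s
    have hc : ∀ s', c s' = J + v s' - (P.mulVec v) s' := by
      intro s'
      have := hBellman s'
      unfold Matrix.mulVec dotProduct
      linarith
    have : (P ^ (t + 1)).mulVec v = (P ^ t).mulVec (P.mulVec v) := by
      rw [pow_succ, ← Matrix.mulVec_mulVec]
    rw [this]
    unfold Matrix.mulVec dotProduct
    simp only [hc]
    rw [show ∀ f g h : S → ℝ, ∑ s', (P ^ t) s s' * (f s' + g s' - h s') =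
      ∑ s', ((P ^ t) s s' * f s' + (P ^ t) s s' * g s' - (P ^ t) s s' * h s') from
      fun f g h => Finset.sum_congr rfl fun i _ => by ring]
    rw [Finset.sum_sub_distrib, Finset.sum_add_distrib, ← Finset.sum_mul, hrow t s, one_mul]
    simp [Matrix.mulVec, dotProduct]
  have hsumT : ∀ T : ℕ, ∀ s,
      ∑ t ∈ Finset.range T, ((P ^ t).mulVec c) s
        = T * J + v s - ((P ^ T).mulVec v) s := by
    intro T s
    have : ∑ t ∈ Finset.range T, ((P ^ t).mulVec c) s
        = ∑ t ∈ Finset.range T, (J + (((P ^ t).mulVec v) s - ((P ^ (t + 1)).mulVec v) s)) := by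
      apply Finset.sum_congr rfl
      intro t _
      rw [hkey t s]; ring
    rw [this, Finset.sum_add_distrib, Finset.sum_const, Finset.card_range,
      Finset.sum_range_sub' (fun t => ((P ^ t).mulVec v) s) T]
    simp [Matrix.mulVec, dotProduct, Matrix.one_apply]
    ring
  have hrate : ∀ s, ∀ T : ℕ, 1 ≤ T →
      |(1 / (T : ℝ)) * (∑ t ∈ Finset.range T, ((P ^ t).mulVec c) s) - J|
        ≤ 2 * M / (T : ℝ) := by
    intro s T hT
    have hTpos : (0 : ℝ) < T := by exact_mod_cast hT
    rw [hsumT T s]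
    have : (1 / (T : ℝ)) * ((T : ℝ) * J + v s - ((P ^ T).mulVec v) s) - J
        = (v s - ((P ^ T).mulVec v) s) / T := by
      field_simp
      ring
    rw [this, abs_div, abs_of_pos hTpos]
    gcongr
    calc |v s - ((P ^ T).mulVec v) s| ≤ |v s| + |((P ^ T).mulVec v) s| := abs_sub _ _
      _ ≤ M + M := add_le_add (hvM s) (hbound T s)
      _ = 2 * M := by ring
  refine ⟨hrate, fun s => ?_⟩
  have h0 : Tendsto (fun T : ℕ => 2 * M / (T : ℝ)) atTop (nhds 0) :=
    tendsto_const_div_atTop_nhds_zero_nat (2 * M)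
  have hsq : Tendsto (fun T : ℕ =>
      (1 / (T : ℝ)) * (∑ t ∈ Finset.range T, ((P ^ t).mulVec c) s) - J) atTop (nhds 0) := by
    apply squeeze_zero_norm' ?_ h0
    filter_upwards [eventually_ge_atTop 1] with T hT
    simpa [Real.norm_eq_abs] using hrate s T hT
  have := hsq.add_const J
  simpa using this
end

section
/- Let t : ℕ → ℕ satisfy: t 1 = 1; t 2 ≤ 2; t is strictly increasing on {k : k ≥ 1} (t (k+1) > t k for all k ≥ 1); and t (k+1) − t k ≤ (t k − t (k−1)) + 1 for all k ≥ 2. Then for all natural numbers N and K, ∑_{k=1}^{K} (t (k+1) − t k) * (if t k < N then 1 else 0) ≤ 2 * N + 1. -/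
/-- Combinatorial core of the Exploration Lemma: for episode start times `t k` with
`t 1 = 1`, `t 2 ≤ 2`, strictly increasing from `k = 1` on, and episode lengths satisfying
`T_k ≤ T_{k-1} + 1`, the total length of all episodes starting before time `N` is at most
`2 * N + 1`. -/
theorem episode_length_bound
    (t : ℕ → ℕ)
    (h1 : t 1 = 1)
    (h2 : t 2 ≤ 2)
    (hmono : ∀ k, 1 ≤ k → t k < t (k + 1))
    (hgrow : ∀ k, 2 ≤ k → t (k + 1) - t k ≤ (t k - t (k - 1)) + 1) :
    ∀ N K : ℕ,
      ∑ k ∈ Finset.Icc 1 K, (t (k + 1) - t k) * (if t k < N then 1 else 0)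
        ≤ 2 * N + 1 := by
  intro N K
  have hle : ∀ k, 1 ≤ k → k ≤ t k := by
    intro k
    induction k with
    | zero => intro h; omega
    | succ n ih =>
      intro _
      by_cases hn : 1 ≤ n
      · have := hmono n hn
        have := ih hn
        omega
      · have hn0 : n = 0 := by omega
        subst hn0
        show 0 + 1 ≤ t 1
        omega
  have hT : ∀ k, 1 ≤ k → t (k + 1) - t k ≤ k := by
    intro k
    induction k with
    | zero => intro h; omega
    | succ n ih =>
      intro _
      by_cases hn : 1 ≤ n
      · have hg := hgrow (n + 1) (by omega)
        simp only [Nat.add_sub_cancel] at hg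
        have := ih hn
        omega
      · have hn0 : n = 0 := by omega
        subst hn0
        show t (0 + 1 + 1) - t (0 + 1) ≤ 0 + 1
        norm_num
        omega
  have key : ∀ K, (∑ k ∈ Finset.Icc 1 K, (t (k + 1) - t k) * (if t k < N then 1 else 0))
        ≤ 2 * N + 1
      ∧ (1 ≤ K → t K < N →
        (∑ k ∈ Finset.Icc 1 K, (t (k + 1) - t k) * (if t k < N then 1 else 0))
          = t (K + 1) - 1) := by
    intro K
    induction K with
    | zero => simp
    | succ n ih =>
      rw [Finset.sum_Icc_succ_top (by omega : 1 ≤ n + 1)]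
      by_cases hN : t (n + 1) < N
      · rw [if_pos hN]
        by_cases hn : 1 ≤ n
        · have heq := ih.2 hn (lt_trans (hmono n hn) hN)
          rw [heq]
          have h1' := hle (n + 1) (by omega)
          have h2' := hmono (n + 1) (by omega)
          have h3' := hT (n + 1) (by omega)
          constructor
          · omega
          · intro _ _; omega
        · have hn0 : n = 0 := by omega
          subst hn0
          norm_num
          constructor
          · omega
          · intro _; omega
      · rw [if_neg hN]
        refine ⟨by simp only [mul_zero, add_zero]; exact ih.1, ?_⟩
        intro _ h; exact absurd h hN
  exact (key K).1
end

section
/- Let (Ω, 𝓕, μ) be a probability space, let Te : Ω → ℕ be measurable, and for each k ∈ ℕ let t k : Ω → ℕ be measurable. Assume that for μ-almost every ω: t 1 ω = 1; t 2 ω ≤ 2; k ↦ t k ω is strictly increasing for k ≥ 1; and t (k+1) ω − t k ω ≤ (t k ω − t (k−1) ω) + 1 for all k ≥ 2. Then for every K ∈ ℕ, ∫⁻ ∑_{k=1}^{K} ((t (k+1) ω − t k ω) : ℝ≥0∞) * (if t k ω < Te ω then 1 else 0) dμ(ω) ≤ 2 * ∫⁻ (Te ω : ℝ≥0∞) dμ(ω)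 + 1. -/
open MeasureTheory
open scoped ENNReal

private lemma telescope_aux (t : ℕ → ℕ) (hmono : ∀ k, 1 ≤ k → t k < t (k + 1)) :
    ∀ n : ℕ, ∑ k ∈ Finset.Icc 1 n, (t (k + 1) - t k) = t (n + 1) - t 1 := by
  intro n
  induction n with
  | zero => simp
  | succ n ih =>
    rw [Finset.sum_Icc_succ_top (by omega : 1 ≤ n + 1), ih]
    have h1 : t 1 ≤ t (n + 1) := by
      clear ih
      induction n with
      | zero => exact le_rfl
      | succ m ihm => exact le_trans ihm (hmono (m + 1) (by omega)).le
    have h2 := hmono (n + 1) (by omega)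
    omega

private lemma pointwise_aux (Te : ℕ) (t : ℕ → ℕ)
    (h1 : t 1 = 1) (h2 : t 2 ≤ 2)
    (hmono : ∀ k, 1 ≤ k → t k < t (k + 1))
    (hgrow : ∀ k, 2 ≤ k → t (k + 1) - t k ≤ (t k - t (k - 1)) + 1) :
    ∀ K : ℕ,
      ∑ k ∈ Finset.Icc 1 K, (t (k + 1) - t k) * (if t k < Te then 1 else 0)
        ≤ 2 * Te := by
  -- t k ≥ k for k ≥ 1
  have hk_le : ∀ k, 1 ≤ k → k ≤ t k := by
    intro k hk
    induction k with
    | zero => omega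
    | succ m ihm =>
      rcases Nat.eq_or_lt_of_le hk with h | h
      · have hm : m = 0 := by omega
        subst hm
        simp only [Nat.zero_add]
        omega
      · have := ihm (by omega)
        have := hmono m (by omega)
        omega
  -- episode lengths T_k ≤ k
  have hT : ∀ k, 1 ≤ k → t (k + 1) - t k ≤ k := by
    intro k hk
    induction k with
    | zero => omega
    | succ m ihm =>
      rcases Nat.eq_or_lt_of_le hk with h | h
      · have hm : m = 0 := by omega
        subst hm
        show t 2 - t 1 ≤ 1
        omega
      · have hm1 : 1 ≤ m := by omega
        have := ihm hm1
        have hg := hgrow (m + 1) (by omega)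
        simp only [Nat.add_sub_cancel] at hg
        omega
  intro K
  induction K with
  | zero => simp
  | succ K ih =>
    rw [Finset.sum_Icc_succ_top (by omega : 1 ≤ K + 1)]
    by_cases hlast : t (K + 1) < Te
    · -- bound the whole sum by the telescoping sum
      have hbound : ∑ k ∈ Finset.Icc 1 (K + 1),
          (t (k + 1) - t k) * (if t k < Te then 1 else 0)
          ≤ ∑ k ∈ Finset.Icc 1 (K + 1), (t (k + 1) - t k) := by
        apply Finset.sum_le_sum
        intro k _
        by_cases h : t k < Te <;> simp [h]
      rw [← Finset.sum_Icc_succ_top (by omega : 1 ≤ K + 1)]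
      refine le_trans hbound ?_
      rw [telescope_aux t hmono (K + 1)]
      have hT2 := hT (K + 1) (by omega)
      have hk2 := hk_le (K + 1) (by omega)
      omega
    · simp only [hlast, if_false, mul_zero, add_zero]
      exact ih

/-- Expectation form of the Exploration Lemma: if the random episode start times `t k`
almost surely satisfy `t 1 = 1`, `t 2 ≤ 2`, strict monotonicity from `k = 1` on, and the
linear-growth criterion `T_k ≤ T_{k-1} + 1`, then the expected total length of episodes
starting before the random time `Te` is at most `2 * E[Te] + 1`. -/
theorem episode_length_bound_expectation
    {Ω : Type*} [MeasurableSpace Ω] (μ : Measure Ω) [IsProbabilityMeasure μ]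
    (Te : Ω → ℕ) (hTe : Measurable Te)
    (t : ℕ → Ω → ℕ) (ht : ∀ k, Measurable (t k))
    (h1 : ∀ᵐ ω ∂μ, t 1 ω = 1)
    (h2 : ∀ᵐ ω ∂μ, t 2 ω ≤ 2)
    (hmono : ∀ᵐ ω ∂μ, ∀ k, 1 ≤ k → t k ω < t (k + 1) ω)
    (hgrow : ∀ᵐ ω ∂μ, ∀ k, 2 ≤ k →
      t (k + 1) ω - t k ω ≤ (t k ω - t (k - 1) ω) + 1) :
    ∀ K : ℕ,
      ∫⁻ ω, ∑ k ∈ Finset.Icc 1 K,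
          ((t (k + 1) ω - t k ω : ℕ) : ℝ≥0∞) * (if t k ω < Te ω then 1 else 0) ∂μ
        ≤ 2 * ∫⁻ ω, (Te ω : ℝ≥0∞) ∂μ + 1 := by
  intro K
  have hle : ∫⁻ ω, ∑ k ∈ Finset.Icc 1 K,
        ((t (k + 1) ω - t k ω : ℕ) : ℝ≥0∞) * (if t k ω < Te ω then 1 else 0) ∂μ
      ≤ ∫⁻ ω, 2 * (Te ω : ℝ≥0∞) ∂μ := by
    apply lintegral_mono_ae
    filter_upwards [h1, h2, hmono, hgrow] with ω h1ω h2ω hmonoω hgrowω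
    have hp := pointwise_aux (Te ω) (fun k => t k ω) h1ω h2ω hmonoω hgrowω K
    calc ∑ k ∈ Finset.Icc 1 K,
          ((t (k + 1) ω - t k ω : ℕ) : ℝ≥0∞) * (if t k ω < Te ω then 1 else 0)
        = ((∑ k ∈ Finset.Icc 1 K,
            (t (k + 1) ω - t k ω) * (if t k ω < Te ω then 1 else 0) : ℕ) : ℝ≥0∞) := by
          push_cast
          refine Finset.sum_congr rfl fun k _ => ?_
          by_cases h : t k ω < Te ω <;> simp [h]
      _ ≤ ((2 * Te ω : ℕ) : ℝ≥0∞) := by exact_mod_cast hp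
      _ = 2 * (Te ω : ℝ≥0∞) := by push_cast; ring
  refine le_trans hle ?_
  have hmeas : Measurable fun ω => ((Te ω : ℕ) : ℝ≥0∞) := measurable_from_nat.comp hTe
  rw [lintegral_const_mul 2 hmeas]
  exact le_self_add
end

section
/- Let S and A be finite nonempty types, p a transition kernel, and s̄ ∈ S a target state with shortest-path cost c_{s̄}(s,a) = 0 if s = s̄ and 1 otherwise. Suppose J : ℝ and v : S → ℝ solve the average-cost Bellman optimality equation: for every s ∈ S, J + v s = min_{a ∈ A} ( c_{s̄}(s,a) + ∑_{s'} p s a s' * v s' ), and let d : S → A be a greedy deterministic policy, i.e. c_{s̄}(s, d s) + ∑_{s'} p s (d s) s' * v s' = J + v s for every s. Let D : ℝ≥0∞ with D ≠ ∞ and assume that for every s ∈ S there exists a stationary policy π with h_π(s) ≤ D. Then for every s ∈ S, h_d(s) ≤ D, i.e. the expected time for the greedy policy d to reach the target state s̄ from any state is at most D. -/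
open Matrix
open scoped ENNReal

/-- The taboo transition matrix of policy `π` under kernel `p`, with the target state
`sbar` made absorbing with no further contribution (its column is zeroed out). -/
noncomputable def tabooMatrix {S A : Type*} [Fintype A] [DecidableEq S]
    (p : S → A → S → ℝ) (π : S → A → ℝ) (sbar : S) : Matrix S S ℝ≥0∞ :=
  fun s s' => if s' = sbar then 0 else ENNReal.ofReal (∑ a, π s a * p s a s')

/-- The expected hitting time of `sbar` from `s` under policy `π`:
`∑ₜ ℙ(hitting time > t)` as a sum in `ℝ≥0∞`. -/
noncomputable def hittingTime {S A : Type*} [Fintype S] [Fintype A] [DecidableEq S]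
    (p : S → A → S → ℝ) (π : S → A → ℝ) (sbar : S) (s : S) : ℝ≥0∞ :=
  ∑' t : ℕ, ((tabooMatrix p π sbar ^ t).mulVec (fun _ => 1)) s

/-- The deterministic policy given by `d : S → A`, as a randomized policy. -/
noncomputable def detPolicy {S A : Type*} [DecidableEq A] (d : S → A) : S → A → ℝ :=
  fun s a => if a = d s then 1 else 0

/-- The shortest-path cost for target state `sbar`. -/
def spCost {S A : Type*} [DecidableEq S] (sbar : S) : S → A → ℝ :=
  fun s _ => if s = sbar then 0 else 1


set_option linter.unusedSectionVars false
section Helpers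
variable {S : Type*} [Fintype S] [DecidableEq S]

lemma pow_entry_nonneg {Q : Matrix S S ℝ} (hQ : ∀ i j, 0 ≤ Q i j) :
    ∀ n i j, 0 ≤ (Q ^ n) i j := by
  intro n
  induction n with
  | zero => intro i j; rw [pow_zero]; by_cases h : i = j <;> simp [Matrix.one_apply, h]
  | succ n ih =>
    intro i j
    rw [pow_succ, Matrix.mul_apply]
    exact Finset.sum_nonneg fun k _ => mul_nonneg (ih i k) (hQ k j)

lemma mulVec_le_mulVec {Q : Matrix S S ℝ} (hQ : ∀ i j, 0 ≤ Q i j)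
    {x y : S → ℝ} (h : ∀ j, x j ≤ y j) (i : S) : (Q *ᵥ x) i ≤ (Q *ᵥ y) i := by
  simp only [Matrix.mulVec, dotProduct]
  exact Finset.sum_le_sum fun j _ => mul_le_mul_of_nonneg_left (h j) (hQ i j)

lemma map_ofReal_pow {Q : Matrix S S ℝ} (hQ : ∀ i j, 0 ≤ Q i j) (n : ℕ) :
    (Q.map ENNReal.ofReal) ^ n = (Q ^ n).map ENNReal.ofReal := by
  induction n with
  | zero =>
    ext i j
    by_cases h : i = j <;> simp [Matrix.one_apply, h]
  | succ n ih =>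
    rw [pow_succ, pow_succ, ih]
    ext i j
    simp only [Matrix.mul_apply, Matrix.map_apply]
    rw [ENNReal.ofReal_sum_of_nonneg
      (fun k _ => mul_nonneg (pow_entry_nonneg hQ n i k) (hQ k j))]
    exact Finset.sum_congr rfl fun k _ => (ENNReal.ofReal_mul (pow_entry_nonneg hQ n i k)).symm

lemma iter_le {Q : Matrix S S ℝ} (hQ : ∀ i j, 0 ≤ Q i j) {w g : S → ℝ}
    (h : ∀ s, w s ≤ g s + (Q *ᵥ w) s) (n : ℕ) (s : S) :
    w s ≤ (∑ t ∈ Finset.range n, ((Q ^ t) *ᵥ g) s) + ((Q ^ n) *ᵥ w) s := by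
  induction n with
  | zero => simp
  | succ n ih =>
    refine ih.trans ?_
    rw [Finset.sum_range_succ]
    have h1 : ((Q ^ n) *ᵥ w) s ≤ ((Q ^ n) *ᵥ (g + Q *ᵥ w)) s :=
      mulVec_le_mulVec (pow_entry_nonneg hQ n) h s
    rw [Matrix.mulVec_add, Matrix.mulVec_mulVec, ← pow_succ] at h1
    simp only [Pi.add_apply] at h1
    linarith

lemma iter_eq {Q : Matrix S S ℝ} {w g : S → ℝ}
    (h : ∀ s, w s = g s + (Q *ᵥ w) s) (n : ℕ) (s : S) :
    w s = (∑ t ∈ Finset.range n, ((Q ^ t) *ᵥ g) s) + ((Q ^ n) *ᵥ w) s := by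
  induction n with
  | zero => simp
  | succ n ih =>
    rw [ih, Finset.sum_range_succ]
    have h1 : ((Q ^ n) *ᵥ w) s = ((Q ^ n) *ᵥ (g + Q *ᵥ w)) s := by
      congr 1; ext j; exact h j
    rw [Matrix.mulVec_add, Matrix.mulVec_mulVec, ← pow_succ] at h1
    simp only [Pi.add_apply] at h1
    linarith

lemma mulVec_e {Q : Matrix S S ℝ} (sbar : S) (i : S) :
    (Q *ᵥ (fun s' => if s' = sbar then (1:ℝ) else 0)) i = Q i sbar := by
  simp only [Matrix.mulVec, dotProduct, mul_ite, mul_one, mul_zero]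
  exact Finset.sum_ite_eq' _ _ _ |>.trans (by simp)

lemma pow_mulVec_e {Q : Matrix S S ℝ} {sbar : S} (hcol : ∀ i, Q i sbar = 0) (t : ℕ) (i : S) :
    ((Q ^ (t+1)) *ᵥ (fun s' => if s' = sbar then (1:ℝ) else 0)) i = 0 := by
  rw [pow_succ, ← Matrix.mulVec_mulVec]
  have : (Q *ᵥ (fun s' => if s' = sbar then (1:ℝ) else 0)) = 0 := by
    ext j; rw [mulVec_e]; exact hcol j
  rw [this, Matrix.mulVec_zero]
  rfl

/-- Sum computation: for `g = (1-J)·𝟙 - e`, the partial sums of `Qᵗ *ᵥ g`. -/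
lemma sum_pow_mulVec_g {Q : Matrix S S ℝ} {sbar : S} (hcol : ∀ i, Q i sbar = 0)
    (J : ℝ) (n : ℕ) (s : S) :
    (∑ t ∈ Finset.range (n+1),
        ((Q ^ t) *ᵥ (fun j => (1 - J) - (if j = sbar then (1:ℝ) else 0))) s)
      = (1 - J) * (∑ t ∈ Finset.range (n+1), ((Q ^ t) *ᵥ (fun _ => (1:ℝ))) s)
        - (if s = sbar then (1:ℝ) else 0) := by
  have hsplit : ∀ t, ((Q ^ t) *ᵥ (fun j => (1 - J) - (if j = sbar then (1:ℝ) else 0))) s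
      = (1 - J) * ((Q ^ t) *ᵥ (fun _ => (1:ℝ))) s
        - ((Q ^ t) *ᵥ (fun j => if j = sbar then (1:ℝ) else 0)) s := by
    intro t
    simp only [Matrix.mulVec, dotProduct, Finset.mul_sum, ← Finset.sum_sub_distrib]
    exact Finset.sum_congr rfl fun j _ => by ring
  simp only [hsplit, Finset.sum_sub_distrib, ← Finset.mul_sum]
  congr 1
  rw [Finset.sum_range_succ']
  have h1 : ∀ t ∈ Finset.range n,
      ((Q ^ (t+1)) *ᵥ (fun j => if j = sbar then (1:ℝ) else 0)) s = 0 :=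
    fun t _ => pow_mulVec_e hcol t s
  rw [Finset.sum_congr rfl h1]
  simp [Matrix.one_mulVec]

/-- Telescoped inequality. -/
lemma key_ineq {Q : Matrix S S ℝ} (hQ : ∀ i j, 0 ≤ Q i j) {sbar : S}
    (hcol : ∀ i, Q i sbar = 0) {w : S → ℝ} {J : ℝ}
    (h : ∀ s, w s ≤ ((1 - J) - (if s = sbar then (1:ℝ) else 0)) + (Q *ᵥ w) s)
    (n : ℕ) (s : S) :
    w s + (if s = sbar then (1:ℝ) else 0) ≤
      (1 - J) * (∑ t ∈ Finset.range (n+1), ((Q ^ t) *ᵥ (fun _ => (1:ℝ))) s)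
        + ((Q ^ (n+1)) *ᵥ w) s := by
  have := iter_le hQ (g := fun j => (1 - J) - (if j = sbar then (1:ℝ) else 0)) h (n+1) s
  rw [sum_pow_mulVec_g hcol] at this
  linarith

/-- Telescoped equality. -/
lemma key_eq {Q : Matrix S S ℝ} {sbar : S}
    (hcol : ∀ i, Q i sbar = 0) {w : S → ℝ} {J : ℝ}
    (h : ∀ s, w s = ((1 - J) - (if s = sbar then (1:ℝ) else 0)) + (Q *ᵥ w) s)
    (n : ℕ) (s : S) :
    w s + (if s = sbar then (1:ℝ) else 0) =
      (1 - J) * (∑ t ∈ Finset.range (n+1), ((Q ^ t) *ᵥ (fun _ => (1:ℝ))) s)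
        + ((Q ^ (n+1)) *ᵥ w) s := by
  have := iter_eq (g := fun j => (1 - J) - (if j = sbar then (1:ℝ) else 0)) h (n+1) s
  rw [sum_pow_mulVec_g hcol] at this
  linarith

lemma u_nonneg {Q : Matrix S S ℝ} (hQ : ∀ i j, 0 ≤ Q i j) (t : ℕ) (s : S) :
    0 ≤ ((Q ^ t) *ᵥ (fun _ => (1:ℝ))) s := by
  simp only [Matrix.mulVec, dotProduct, mul_one]
  exact Finset.sum_nonneg fun j _ => pow_entry_nonneg hQ t s j

lemma u_succ {Q : Matrix S S ℝ} (t : ℕ) :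
    ((Q ^ (t+1)) *ᵥ (fun _ => (1:ℝ))) = Q *ᵥ ((Q ^ t) *ᵥ (fun _ => (1:ℝ))) := by
  rw [Matrix.mulVec_mulVec, ← pow_succ']

lemma u_le_one {Q : Matrix S S ℝ} (hQ : ∀ i j, 0 ≤ Q i j)
    (hrow : ∀ i, ∑ j, Q i j ≤ 1) (t : ℕ) (s : S) :
    ((Q ^ t) *ᵥ (fun _ => (1:ℝ))) s ≤ 1 := by
  induction t generalizing s with
  | zero => simp [Matrix.one_mulVec]
  | succ t ih =>
    rw [u_succ]
    calc (Q *ᵥ ((Q ^ t) *ᵥ (fun _ => (1:ℝ)))) s ≤ (Q *ᵥ (fun _ => (1:ℝ))) s :=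
          mulVec_le_mulVec hQ (fun j => ih j) s
      _ ≤ 1 := by simpa [Matrix.mulVec, dotProduct] using hrow s

lemma u_antitone {Q : Matrix S S ℝ} (hQ : ∀ i j, 0 ≤ Q i j)
    (hrow : ∀ i, ∑ j, Q i j ≤ 1) (t : ℕ) (s : S) :
    ((Q ^ (t+1)) *ᵥ (fun _ => (1:ℝ))) s ≤ ((Q ^ t) *ᵥ (fun _ => (1:ℝ))) s := by
  induction t generalizing s with
  | zero => simpa [Matrix.one_mulVec] using u_le_one hQ hrow 1 s
  | succ t ih =>
    rw [u_succ (t+1)]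
    conv_rhs => rw [u_succ t]
    exact mulVec_le_mulVec hQ (fun j => ih j) s

lemma u_mono_le {Q : Matrix S S ℝ} (hQ : ∀ i j, 0 ≤ Q i j)
    (hrow : ∀ i, ∑ j, Q i j ≤ 1) {t t' : ℕ} (h : t ≤ t') (s : S) :
    ((Q ^ t') *ᵥ (fun _ => (1:ℝ))) s ≤ ((Q ^ t) *ᵥ (fun _ => (1:ℝ))) s := by
  induction t' with
  | zero => simp_all
  | succ t' ih =>
    rcases Nat.lt_or_ge t (t'+1) with hlt | hge
    · exact (u_antitone hQ hrow t' s).trans (ih (Nat.lt_succ_iff.mp hlt))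
    · have : t = t' + 1 := le_antisymm h hge
      subst this; rfl

lemma card_mul_u_le {Q : Matrix S S ℝ} (hQ : ∀ i j, 0 ≤ Q i j)
    (hrow : ∀ i, ∑ j, Q i j ≤ 1) (n : ℕ) (s : S) :
    (n : ℝ) * ((Q ^ n) *ᵥ (fun _ => (1:ℝ))) s
      ≤ ∑ t ∈ Finset.range n, ((Q ^ t) *ᵥ (fun _ => (1:ℝ))) s := by
  have := Finset.card_nsmul_le_sum (Finset.range n)
    (fun t => ((Q ^ t) *ᵥ (fun _ => (1:ℝ))) s)
    (((Q ^ n) *ᵥ (fun _ => (1:ℝ))) s)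
    (fun t ht => u_mono_le hQ hrow (le_of_lt (Finset.mem_range.mp ht)) s)
  simpa [nsmul_eq_mul] using this

lemma mulVec_const {Q : Matrix S S ℝ} (c : ℝ) (s : S) :
    (Q *ᵥ (fun _ => c)) s = c * (Q *ᵥ (fun _ => (1:ℝ))) s := by
  simp only [Matrix.mulVec, dotProduct, mul_one, Finset.mul_sum]
  exact Finset.sum_congr rfl fun j _ => mul_comm _ _

lemma abs_pow_mulVec_le {Q : Matrix S S ℝ} (hQ : ∀ i j, 0 ≤ Q i j)
    {w : S → ℝ} {M : ℝ} (hM : ∀ j, |w j| ≤ M) (n : ℕ) (s : S) :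
    |((Q ^ n) *ᵥ w) s| ≤ M * ((Q ^ n) *ᵥ (fun _ => (1:ℝ))) s := by
  rw [abs_le]
  constructor
  · have := mulVec_le_mulVec (Q := Q ^ n) (pow_entry_nonneg hQ n)
      (x := fun _ => -M) (y := w) (fun j => neg_le_of_abs_le (hM j)) s
    rw [mulVec_const (Q := Q ^ n) (-M) s] at this
    linarith
  · have := mulVec_le_mulVec (Q := Q ^ n) (pow_entry_nonneg hQ n)
      (x := w) (y := fun _ => M) (fun j => le_of_abs_le (hM j)) s
    rw [mulVec_const (Q := Q ^ n) M s] at this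
    linarith

lemma shift_lemma {q w : S → ℝ} (sbar : S) (hq : ∑ s', q s' = 1) (v : S → ℝ)
    (hw : ∀ s', w s' = v s' - v sbar) :
    ∑ s', q s' * v s'
      = (∑ s', (if s' = sbar then (0:ℝ) else q s') * w s') + v sbar := by
  have h1 : ∀ s' ∈ Finset.univ, (if s' = sbar then (0:ℝ) else q s') * w s'
      = q s' * v s' - q s' * v sbar := by
    intro s' _
    by_cases h : s' = sbar
    · simp [h, hw]
    · simp only [if_neg h, hw s']; ring
  rw [Finset.sum_congr rfl h1, Finset.sum_sub_distrib, ← Finset.sum_mul, hq]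
  ring

end Helpers

section Part2
variable {S A : Type*} [Fintype S] [Fintype A] [DecidableEq S] [DecidableEq A]

/-- The real-valued taboo matrix. -/
noncomputable def realTaboo (p : S → A → S → ℝ) (π : S → A → ℝ) (sbar : S) :
    Matrix S S ℝ :=
  fun s s' => if s' = sbar then 0 else ∑ a, π s a * p s a s'

lemma realTaboo_nonneg {p : S → A → S → ℝ} (hp : IsTransitionKernel p)
    {π : S → A → ℝ} (hπ : IsStationaryPolicy π) (sbar : S) :
    ∀ i j, 0 ≤ realTaboo p π sbar i j := by
  intro i j
  unfold realTaboo
  split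
  · rfl
  · exact Finset.sum_nonneg fun a _ => mul_nonneg (hπ.1 i a) (hp.1 i a j)

lemma q_sum_one {p : S → A → S → ℝ} (hp : IsTransitionKernel p)
    {π : S → A → ℝ} (hπ : IsStationaryPolicy π) (s : S) :
    ∑ s', ∑ a, π s a * p s a s' = 1 := by
  rw [Finset.sum_comm]
  have : ∀ a ∈ Finset.univ, ∑ s', π s a * p s a s' = π s a := by
    intro a _
    rw [← Finset.mul_sum, hp.2 s a, mul_one]
  rw [Finset.sum_congr rfl this, hπ.2 s]

lemma realTaboo_row_sum_le_one {p : S → A → S → ℝ} (hp : IsTransitionKernel p)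
    {π : S → A → ℝ} (hπ : IsStationaryPolicy π) (sbar : S) :
    ∀ i, ∑ j, realTaboo p π sbar i j ≤ 1 := by
  intro i
  calc ∑ j, realTaboo p π sbar i j ≤ ∑ j, ∑ a, π i a * p i a j := by
        refine Finset.sum_le_sum fun j _ => ?_
        unfold realTaboo
        split
        · exact Finset.sum_nonneg fun a _ => mul_nonneg (hπ.1 i a) (hp.1 i a j)
        · exact le_rfl
    _ = 1 := q_sum_one hp hπ i

lemma realTaboo_col {p : S → A → S → ℝ} {π : S → A → ℝ} (sbar : S) (i : S) :
    realTaboo p π sbar i sbar = 0 := by simp [realTaboo]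

lemma tabooMatrix_eq_map (p : S → A → S → ℝ) (π : S → A → ℝ) (sbar : S) :
    tabooMatrix p π sbar = (realTaboo p π sbar).map ENNReal.ofReal := by
  ext i j
  simp only [tabooMatrix, realTaboo, Matrix.map_apply]
  split <;> simp

lemma hittingTime_eq_tsum {p : S → A → S → ℝ} (hp : IsTransitionKernel p)
    {π : S → A → ℝ} (hπ : IsStationaryPolicy π) (sbar s : S) :
    hittingTime p π sbar s
      = ∑' t : ℕ, ENNReal.ofReal (((realTaboo p π sbar ^ t) *ᵥ (fun _ => (1:ℝ))) s) := by
  unfold hittingTime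
  congr 1
  ext t
  rw [tabooMatrix_eq_map, map_ofReal_pow (realTaboo_nonneg hp hπ sbar)]
  simp only [Matrix.mulVec, dotProduct, Matrix.map_apply, mul_one]
  rw [ENNReal.ofReal_sum_of_nonneg
    (fun j _ => pow_entry_nonneg (realTaboo_nonneg hp hπ sbar) t s j)]

lemma partial_sum_le_of_hitting_le {p : S → A → S → ℝ} (hp : IsTransitionKernel p)
    {π : S → A → ℝ} (hπ : IsStationaryPolicy π) {sbar s : S} {D : ℝ≥0∞} (hD : D ≠ ⊤)
    (h : hittingTime p π sbar s ≤ D) (n : ℕ) :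
    ∑ t ∈ Finset.range n, ((realTaboo p π sbar ^ t) *ᵥ (fun _ => (1:ℝ))) s ≤ D.toReal := by
  rw [hittingTime_eq_tsum hp hπ] at h
  rw [← ENNReal.ofReal_le_iff_le_toReal hD,
    ENNReal.ofReal_sum_of_nonneg (fun t _ => u_nonneg (realTaboo_nonneg hp hπ sbar) t s)]
  exact le_trans (ENNReal.sum_le_tsum _) h

lemma hitting_le_of_partial_sum_le {p : S → A → S → ℝ} (hp : IsTransitionKernel p)
    {π : S → A → ℝ} (hπ : IsStationaryPolicy π) {sbar s : S} {D : ℝ≥0∞} (hD : D ≠ ⊤)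
    (h : ∀ n, ∑ t ∈ Finset.range n, ((realTaboo p π sbar ^ t) *ᵥ (fun _ => (1:ℝ))) s
        ≤ D.toReal) :
    hittingTime p π sbar s ≤ D := by
  rw [hittingTime_eq_tsum hp hπ, ENNReal.tsum_eq_iSup_sum]
  refine iSup_le fun F => ?_
  obtain ⟨n, hn⟩ := Finset.exists_nat_subset_range F
  calc ∑ t ∈ F, ENNReal.ofReal (((realTaboo p π sbar ^ t) *ᵥ (fun _ => (1:ℝ))) s)
      ≤ ∑ t ∈ Finset.range n, ENNReal.ofReal
          (((realTaboo p π sbar ^ t) *ᵥ (fun _ => (1:ℝ))) s) :=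
        Finset.sum_le_sum_of_subset hn
    _ = ENNReal.ofReal (∑ t ∈ Finset.range n,
          ((realTaboo p π sbar ^ t) *ᵥ (fun _ => (1:ℝ))) s) :=
        (ENNReal.ofReal_sum_of_nonneg
          (fun t _ => u_nonneg (realTaboo_nonneg hp hπ sbar) t s)).symm
    _ ≤ ENNReal.ofReal D.toReal := ENNReal.ofReal_le_ofReal (h n)
    _ = D := ENNReal.ofReal_toReal hD

lemma detPolicy_stationary (d : S → A) : IsStationaryPolicy (detPolicy d) := by
  constructor
  · intro s a
    unfold detPolicy
    split <;> norm_num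
  · intro s
    simp [detPolicy]

lemma realTaboo_det (p : S → A → S → ℝ) (d : S → A) (sbar : S) (s s' : S) :
    realTaboo p (detPolicy d) sbar s s' = if s' = sbar then 0 else p s (d s) s' := by
  unfold realTaboo detPolicy
  congr 1
  simp [ite_mul]

end Part2

section Part3
variable {S A : Type*} [Fintype S] [Fintype A] [DecidableEq S] [DecidableEq A]

lemma ite_swap (c : Prop) [Decidable c] :
    (if c then (0:ℝ) else 1) = 1 - (if c then (1:ℝ) else 0) := by split <;> norm_num

lemma step_ineq [Nonempty A]
    {p : S → A → S → ℝ} (hp : IsTransitionKernel p) {sbar : S} {J : ℝ} {v : S → ℝ}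
    (hBellman : ∀ s, J + v s = Finset.univ.inf' Finset.univ_nonempty
        (fun a => spCost sbar s a + ∑ s', p s a s' * v s'))
    {π : S → A → ℝ} (hπ : IsStationaryPolicy π) (s : S) :
    (v s - v sbar) ≤ ((1 - J) - (if s = sbar then (1:ℝ) else 0))
      + ((realTaboo p π sbar) *ᵥ (fun s' => v s' - v sbar)) s := by
  have hBa : ∀ a : A, J + v s ≤ spCost sbar s a + ∑ s', p s a s' * v s' := by
    intro a; rw [hBellman s]; exact Finset.inf'_le _ (Finset.mem_univ a)
  have hcost : ∀ a : A, spCost sbar s a = (if s = sbar then (0:ℝ) else 1) := fun _ => rfl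
  have h3 : ∑ a, π s a * (J + v s)
      ≤ ∑ a, π s a * ((if s = sbar then (0:ℝ) else 1) + ∑ s', p s a s' * v s') := by
    refine Finset.sum_le_sum fun a _ => mul_le_mul_of_nonneg_left ?_ (hπ.1 s a)
    rw [← hcost a]; exact hBa a
  have hL : ∑ a, π s a * (J + v s) = J + v s := by
    rw [← Finset.sum_mul, hπ.2 s, one_mul]
  have hR : ∑ a, π s a * ((if s = sbar then (0:ℝ) else 1) + ∑ s', p s a s' * v s')
      = (if s = sbar then (0:ℝ) else 1) + ∑ a, π s a * ∑ s', p s a s' * v s' := by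
    simp only [mul_add, Finset.sum_add_distrib]
    rw [← Finset.sum_mul, hπ.2 s, one_mul]
  rw [hL, hR] at h3
  have hswap : ∑ a, π s a * ∑ s', p s a s' * v s'
      = ∑ s', (∑ a, π s a * p s a s') * v s' := by
    simp_rw [Finset.mul_sum, Finset.sum_mul]
    rw [Finset.sum_comm]
    exact Finset.sum_congr rfl fun s' _ =>
      Finset.sum_congr rfl fun a _ => (mul_assoc _ _ _).symm
  have hshift := shift_lemma (q := fun s' => ∑ a, π s a * p s a s')
    (w := fun s' => v s' - v sbar) sbar (q_sum_one hp hπ s) v (fun _ => rfl)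
  have hmv : ((realTaboo p π sbar) *ᵥ (fun s' => v s' - v sbar)) s
      = ∑ s', (if s' = sbar then (0:ℝ) else ∑ a, π s a * p s a s') * (v s' - v sbar) := by
    simp only [Matrix.mulVec, dotProduct, realTaboo]
  rw [hswap, hshift] at h3
  rw [hmv]
  have hce := ite_swap (s = sbar)
  linarith

lemma step_eq
    {p : S → A → S → ℝ} (hp : IsTransitionKernel p) {sbar : S} {J : ℝ} {v : S → ℝ}
    {d : S → A}
    (hgreedy : ∀ s, spCost sbar s (d s) + ∑ s', p s (d s) s' * v s' = J + v s) (s : S) :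
    (v s - v sbar) = ((1 - J) - (if s = sbar then (1:ℝ) else 0))
      + ((realTaboo p (detPolicy d) sbar) *ᵥ (fun s' => v s' - v sbar)) s := by
  have hg := hgreedy s
  have hcost : spCost sbar s (d s) = (if s = sbar then (0:ℝ) else 1) := rfl
  have hshift := shift_lemma (q := fun s' => p s (d s) s')
    (w := fun s' => v s' - v sbar) sbar (hp.2 s (d s)) v (fun _ => rfl)
  have hmv : ((realTaboo p (detPolicy d) sbar) *ᵥ (fun s' => v s' - v sbar)) s
      = ∑ s', (if s' = sbar then (0:ℝ) else p s (d s) s') * (v s' - v sbar) := by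
    simp only [Matrix.mulVec, dotProduct]
    exact Finset.sum_congr rfl fun j _ => by rw [realTaboo_det]
  rw [hcost, hshift] at hg
  rw [hmv]
  have hce := ite_swap (s = sbar)
  linarith

end Part3

/-- Lemma A.4: a greedy policy for a solution of the average-cost Bellman optimality
equation with shortest-path cost reaches the target state within `D` expected steps from
every state, provided the MDP has diameter at most `D`. -/
theorem greedy_hitting_time_le_diameter
    {S A : Type*} [Fintype S] [Fintype A] [DecidableEq S] [DecidableEq A]
    [Nonempty S] [Nonempty A]
    (p : S → A → S → ℝ) (hp : IsTransitionKernel p) (sbar : S)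
    (J : ℝ) (v : S → ℝ)
    (hBellman : ∀ s, J + v s =
      Finset.univ.inf' Finset.univ_nonempty
        (fun a => spCost sbar s a + ∑ s', p s a s' * v s'))
    (d : S → A)
    (hgreedy : ∀ s, spCost sbar s (d s) + ∑ s', p s (d s) s' * v s' = J + v s)
    (D : ℝ≥0∞) (hD : D ≠ ∞)
    (hdiam : ∀ s, ∃ π : S → A → ℝ, IsStationaryPolicy π ∧ hittingTime p π sbar s ≤ D) :
    ∀ s, hittingTime p (detPolicy d) sbar s ≤ D := by
  intro s
  -- abbreviations
  have hdstat := detPolicy_stationary (A := A) (S := S) d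
  obtain ⟨π, hπ, hπD⟩ := hdiam s
  obtain ⟨π₀, hπ₀, hπ₀D⟩ := hdiam sbar
  -- the centered value function and its bound
  set w : S → ℝ := fun s' => v s' - v sbar with hwdef
  set M : ℝ := Finset.univ.sup' Finset.univ_nonempty (fun s' => |w s'|) with hMdef
  have hMw : ∀ j, |w j| ≤ M := by
    intro j; rw [hMdef]
    exact Finset.le_sup' (fun s' => |w s'|) (Finset.mem_univ j)
  have hM0 : 0 ≤ M := le_trans (abs_nonneg _) (hMw (Classical.arbitrary S))
  have hD'0 : 0 ≤ D.toReal := ENNReal.toReal_nonneg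
  -- matrices
  have hQdnn := realTaboo_nonneg hp hdstat sbar
  have hQdrow := realTaboo_row_sum_le_one hp hdstat sbar
  have hQπnn := realTaboo_nonneg hp hπ sbar
  have hQπrow := realTaboo_row_sum_le_one hp hπ sbar
  have hQ₀nn := realTaboo_nonneg hp hπ₀ sbar
  have hQ₀row := realTaboo_row_sum_le_one hp hπ₀ sbar
  -- key identities / inequalities
  have keyd : ∀ (n : ℕ) (s' : S), w s' + (if s' = sbar then (1:ℝ) else 0)
      = (1 - J) * (∑ t ∈ Finset.range (n+1),
          ((realTaboo p (detPolicy d) sbar ^ t) *ᵥ (fun _ => (1:ℝ))) s')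
        + ((realTaboo p (detPolicy d) sbar ^ (n+1)) *ᵥ w) s' :=
    fun n s' => key_eq (realTaboo_col sbar) (fun s'' => step_eq hp hgreedy s'') n s'
  have keyπ : ∀ n : ℕ, w s + (if s = sbar then (1:ℝ) else 0)
      ≤ (1 - J) * (∑ t ∈ Finset.range (n+1),
          ((realTaboo p π sbar ^ t) *ᵥ (fun _ => (1:ℝ))) s)
        + ((realTaboo p π sbar ^ (n+1)) *ᵥ w) s :=
    fun n => key_ineq hQπnn (realTaboo_col sbar)
      (fun s'' => step_ineq hp hBellman hπ s'') n s
  have key₀ : ∀ n : ℕ, (1:ℝ)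
      ≤ (1 - J) * (∑ t ∈ Finset.range (n+1),
          ((realTaboo p π₀ sbar ^ t) *ᵥ (fun _ => (1:ℝ))) sbar)
        + ((realTaboo p π₀ sbar ^ (n+1)) *ᵥ w) sbar := by
    intro n
    have := key_ineq hQ₀nn (realTaboo_col sbar)
      (fun s'' => step_ineq hp hBellman hπ₀ s'') n sbar
    rw [← hwdef] at this
    simpa using this
  have hwsbar : w sbar = 0 := by simp [hwdef]
  -- partial sums bounded by D.toReal
  have hHπ : ∀ n, ∑ t ∈ Finset.range n,
      ((realTaboo p π sbar ^ t) *ᵥ (fun _ => (1:ℝ))) s ≤ D.toReal :=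
    partial_sum_le_of_hitting_le hp hπ hD hπD
  have hH₀ : ∀ n, ∑ t ∈ Finset.range n,
      ((realTaboo p π₀ sbar ^ t) *ᵥ (fun _ => (1:ℝ))) sbar ≤ D.toReal :=
    partial_sum_le_of_hitting_le hp hπ₀ hD hπ₀D
  -- Step 1: 1 - J > 0
  have hKpos : 0 < 1 - J := by
    by_contra hKle
    push_neg at hKle
    obtain ⟨N, hN⟩ := exists_nat_gt (M * D.toReal)
    have h1 := key₀ N
    have h2 : |((realTaboo p π₀ sbar ^ (N+1)) *ᵥ w) sbar|
        ≤ M * ((realTaboo p π₀ sbar ^ (N+1)) *ᵥ (fun _ => (1:ℝ))) sbar :=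
      abs_pow_mulVec_le hQ₀nn hMw (N+1) sbar
    have h3 : ((N:ℝ)+1) * ((realTaboo p π₀ sbar ^ (N+1)) *ᵥ (fun _ => (1:ℝ))) sbar
        ≤ ∑ t ∈ Finset.range (N+1),
          ((realTaboo p π₀ sbar ^ t) *ᵥ (fun _ => (1:ℝ))) sbar := by
      have := card_mul_u_le hQ₀nn hQ₀row (N+1) sbar
      push_cast at this
      exact this
    have h4 := hH₀ (N+1)
    have h5 : 0 ≤ ((realTaboo p π₀ sbar ^ (N+1)) *ᵥ (fun _ => (1:ℝ))) sbar :=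
      u_nonneg hQ₀nn (N+1) sbar
    have h6 : 0 ≤ ∑ t ∈ Finset.range (N+1),
        ((realTaboo p π₀ sbar ^ t) *ᵥ (fun _ => (1:ℝ))) sbar :=
      Finset.sum_nonneg fun t _ => u_nonneg hQ₀nn t sbar
    have h7 : (1 - J) * (∑ t ∈ Finset.range (N+1),
        ((realTaboo p π₀ sbar ^ t) *ᵥ (fun _ => (1:ℝ))) sbar) ≤ 0 :=
      mul_nonpos_of_nonpos_of_nonneg hKle h6
    have habs := abs_le.mp h2
    have hNpos : (0:ℝ) < (N:ℝ) + 1 := by positivity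
    nlinarith [mul_le_mul_of_nonneg_left h3 hM0, mul_le_mul_of_nonneg_left h4 hM0]
  -- Step 2: uniform bound on greedy partial sums
  have hB : ∀ n : ℕ, (1 - J) * (∑ t ∈ Finset.range (n+1),
      ((realTaboo p (detPolicy d) sbar ^ t) *ᵥ (fun _ => (1:ℝ))) s)
      ≤ w s + (if s = sbar then (1:ℝ) else 0) + M := by
    intro n
    have h1 := keyd n s
    have h2 := (abs_le.mp (abs_pow_mulVec_le hQdnn hMw (n+1) s)).1
    have h3 := u_le_one hQdnn hQdrow (n+1) s
    have h4 := u_nonneg hQdnn (n+1) s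
    nlinarith
  -- Step 3: the main per-n estimate
  have main : ∀ n : ℕ, ((n:ℝ)+1) * ((1-J)^2 * (∑ t ∈ Finset.range (n+1),
      ((realTaboo p (detPolicy d) sbar ^ t) *ᵥ (fun _ => (1:ℝ))) s))
      ≤ ((n:ℝ)+1) * ((1-J)^2 * D.toReal)
        + ((1-J) * M * D.toReal
          + M * (w s + (if s = sbar then (1:ℝ) else 0) + M)) := by
    intro n
    have b1 : (1-J) * (∑ t ∈ Finset.range (n+1),
        ((realTaboo p (detPolicy d) sbar ^ t) *ᵥ (fun _ => (1:ℝ))) s)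
        ≤ (w s + (if s = sbar then (1:ℝ) else 0))
          + M * ((realTaboo p (detPolicy d) sbar ^ (n+1)) *ᵥ (fun _ => (1:ℝ))) s := by
      have h1 := keyd n s
      have h2 := (abs_le.mp (abs_pow_mulVec_le hQdnn hMw (n+1) s)).1
      linarith
    have b2 : ((n:ℝ)+1) * ((realTaboo p (detPolicy d) sbar ^ (n+1)) *ᵥ (fun _ => (1:ℝ))) s
        ≤ ∑ t ∈ Finset.range (n+1),
          ((realTaboo p (detPolicy d) sbar ^ t) *ᵥ (fun _ => (1:ℝ))) s := by
      have := card_mul_u_le hQdnn hQdrow (n+1) s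
      push_cast at this
      exact this
    have b3 := hB n
    have b4 : w s + (if s = sbar then (1:ℝ) else 0)
        ≤ (1-J) * D.toReal
          + M * ((realTaboo p π sbar ^ (n+1)) *ᵥ (fun _ => (1:ℝ))) s := by
      have h1 := keyπ n
      have h2 := (abs_le.mp (abs_pow_mulVec_le hQπnn hMw (n+1) s)).2
      have h3 := hHπ (n+1)
      have h4 := mul_le_mul_of_nonneg_left h3 (le_of_lt hKpos)
      linarith
    have b5 : ((n:ℝ)+1) * ((realTaboo p π sbar ^ (n+1)) *ᵥ (fun _ => (1:ℝ))) s
        ≤ D.toReal := by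
      have h1 : ((n:ℝ)+1) * ((realTaboo p π sbar ^ (n+1)) *ᵥ (fun _ => (1:ℝ))) s
          ≤ ∑ t ∈ Finset.range (n+1),
            ((realTaboo p π sbar ^ t) *ᵥ (fun _ => (1:ℝ))) s := by
        have := card_mul_u_le hQπnn hQπrow (n+1) s
        push_cast at this
        exact this
      exact h1.trans (hHπ (n+1))
    have hn1 : (0:ℝ) ≤ (n:ℝ)+1 := by positivity
    have hKn : (0:ℝ) ≤ (1-J) * ((n:ℝ)+1) := mul_nonneg (le_of_lt hKpos) hn1
    have hKM : (0:ℝ) ≤ (1-J) * M := mul_nonneg (le_of_lt hKpos) hM0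
    have c1 := mul_le_mul_of_nonneg_left b1 hKn
    have c2 := mul_le_mul_of_nonneg_left b2 hKM
    have c3 := mul_le_mul_of_nonneg_left b3 hM0
    have c4 := mul_le_mul_of_nonneg_left b4 hKn
    have c5 := mul_le_mul_of_nonneg_left b5 hKM
    nlinarith [c1, c2, c3, c4, c5]
  -- Step 4: conclude that every partial sum is at most D.toReal
  have final : ∀ n₀ : ℕ, ∑ t ∈ Finset.range n₀,
      ((realTaboo p (detPolicy d) sbar ^ t) *ᵥ (fun _ => (1:ℝ))) s ≤ D.toReal := by
    intro n₀
    have hK2 : (0:ℝ) < (1-J)^2 := by positivity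
    have hmono : ∀ n, n₀ ≤ n → ∑ t ∈ Finset.range n₀,
        ((realTaboo p (detPolicy d) sbar ^ t) *ᵥ (fun _ => (1:ℝ))) s
        ≤ ∑ t ∈ Finset.range n,
          ((realTaboo p (detPolicy d) sbar ^ t) *ᵥ (fun _ => (1:ℝ))) s := by
      intro n hn
      exact Finset.sum_le_sum_of_subset_of_nonneg
        (Finset.range_subset_range.mpr hn) (fun t _ _ => u_nonneg hQdnn t s)
    set C : ℝ := (1-J) * M * D.toReal
      + M * (w s + (if s = sbar then (1:ℝ) else 0) + M) with hCdef
    have hle : (1-J)^2 * (∑ t ∈ Finset.range n₀,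
        ((realTaboo p (detPolicy d) sbar ^ t) *ᵥ (fun _ => (1:ℝ))) s)
        ≤ (1-J)^2 * D.toReal := by
      have h0 : Filter.Tendsto (fun n : ℕ => C / ((n:ℝ)+1)) Filter.atTop (nhds 0) := by
        have heq : (fun n : ℕ => C / ((n:ℝ)+1))
            = ((fun n : ℕ => C / (n:ℝ)) ∘ fun a => a + 1) :=
          funext fun n => by simp [Function.comp]
        rw [heq]
        exact (tendsto_const_div_atTop_nhds_zero_nat C).comp
          (Filter.tendsto_add_atTop_nat 1)
      have htend : Filter.Tendsto (fun n : ℕ => (1-J)^2 * D.toReal + C / ((n:ℝ)+1))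
          Filter.atTop (nhds ((1-J)^2 * D.toReal)) := by
        simpa using Filter.Tendsto.const_add ((1-J)^2 * D.toReal) h0
      refine ge_of_tendsto htend ?_
      filter_upwards [Filter.eventually_ge_atTop n₀] with n hn
      have hnpos : (0:ℝ) < (n:ℝ)+1 := by positivity
      have h1 := hmono (n+1) (hn.trans (Nat.le_succ n))
      have h2 := main n
      have h3 := mul_le_mul_of_nonneg_left
        (mul_le_mul_of_nonneg_left h1 (le_of_lt hK2)) (le_of_lt hnpos)
      have h4 : ((n:ℝ)+1) * ((1-J)^2 * (∑ t ∈ Finset.range n₀,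
          ((realTaboo p (detPolicy d) sbar ^ t) *ᵥ (fun _ => (1:ℝ))) s))
          ≤ ((n:ℝ)+1) * ((1-J)^2 * D.toReal) + C := by linarith
      have h5 : (1-J)^2 * (∑ t ∈ Finset.range n₀,
          ((realTaboo p (detPolicy d) sbar ^ t) *ᵥ (fun _ => (1:ℝ))) s)
          - (1-J)^2 * D.toReal ≤ C / ((n:ℝ)+1) := by
        rw [le_div_iff₀ hnpos]
        nlinarith [h4]
      linarith
    exact le_of_mul_le_mul_left hle hK2
  exact hitting_le_of_partial_sum_le hp hdstat hD final
end
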